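/- Let Λ and T be n×n unitary complex matrices and q a complex number with |q| = 1 such that TΛ = q·ΛT. Then [[Λ,Λ†],Λ] + [[Λ,T],T†] + [[Λ,T†],T] = 2|1−q|²·Λ and [[T,T†],T] + [[T,Λ],Λ†] + [[T,Λ†],Λ] = 2|1−q|²·T; that is, (Λ,T) satisfies the DMSA equations with spectrum {|1−q|²}. In particular this applies to the fuzzy torus matrices Λ = e^{iθ}g and T = e^{iθ′}h, where g is diagonal with g_{kk} = q^{k−1}, h is the cyclic shift matrix with h_{k,k+1} = 1 (1 ≤ k ≤ n−1), h_{n,1} = 1, and qⁿ = 1. -/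

import Mathlib

/-! The exchange relation `T Λ = q Λ T` and unitarity of `T` give `T† Λ T = q⁻¹ Λ` and
`T Λ T† = q Λ`, so both double commutators of `Λ` with `T` and `T†` equal
`(1 - q)(1 - q⁻¹) Λ`, while `[Λ, Λ†] = 0` since `Λ` is normal. Exchanging the roles of `Λ` and
`T` replaces `q` by `q⁻¹`, which leaves `(1 - q)(1 - q⁻¹) = |1 - q|²` unchanged. For the fuzzy
torus, `h` is the permutation matrix of the cyclic rotation, and `h g = q g h` because `qⁿ = 1`
makes `q^k` depend only on `k mod n`. -/

open scoped Matrix BigOperators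

noncomputable def matComm {n : ℕ} (A B : Matrix (Fin n) (Fin n) ℂ) : Matrix (Fin n) (Fin n) ℂ :=
  A * B - B * A

/-- The clock matrix `g` with `g_{kk} = q^{k-1}` (indices `k = 1, …, n`). -/
noncomputable def clock (n : ℕ) (q : ℂ) : Matrix (Fin n) (Fin n) ℂ :=
  Matrix.diagonal fun k => q ^ (k : ℕ)

/-- The cyclic shift matrix `h` with `h_{k,k+1} = 1` for `1 ≤ k ≤ n−1`, `h_{n,1} = 1`,
and all other entries zero. -/
noncomputable def shift (n : ℕ) : Matrix (Fin n) (Fin n) ℂ :=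
  Matrix.of fun k l => if (l : ℕ) = ((k : ℕ) + 1) % n then 1 else 0

section DMSA

variable {𝕜 A : Type*} [Field 𝕜] [Ring A] [Algebra 𝕜 A] {u v : A} {q : 𝕜}

lemma mul_eq_inv_smul_mul_of_mul_eq_smul_mul (hq : q ≠ 0) (h : v * u = q • (u * v)) :
    u * v = q⁻¹ • (v * u) := by
  rw [h, smul_smul, inv_mul_cancel₀ hq, one_smul]

variable [StarRing A]

def DMSAEquations (μ : 𝕜) (Λ T : A) : Prop :=
  ⁅⁅Λ, star Λ⁆, Λ⁆ + ⁅⁅Λ, T⁆, star T⁆ + ⁅⁅Λ, star T⁆, T⁆ = (2 * μ) • Λ ∧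
    ⁅⁅T, star T⁆, T⁆ + ⁅⁅T, Λ⁆, star Λ⁆ + ⁅⁅T, star Λ⁆, Λ⁆ = (2 * μ) • T

lemma star_mul_eq_inv_smul_mul_star (hv : v ∈ unitary A) (hq : q ≠ 0)
    (h : v * u = q • (u * v)) : star v * u = q⁻¹ • (u * star v) := by
  have hconj : u * star v = q • (star v * u) := calc
    u * star v = star v * (v * u) * star v := by
      rw [← mul_assoc, Unitary.star_mul_self_of_mem hv, one_mul]
    _ = q • (star v * u) := by
      rw [h, mul_smul_comm, smul_mul_assoc, mul_assoc, mul_assoc,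
        Unitary.mul_star_self_of_mem hv, mul_one]
  rw [hconj, smul_smul, inv_mul_cancel₀ hq, one_smul]

lemma lie_lie_star_eq_smul_of_mul_eq_smul_mul (hv : v ∈ unitary A) (hq : q ≠ 0)
    (h : v * u = q • (u * v)) : ⁅⁅u, v⁆, star v⁆ = ((1 - q) * (1 - q⁻¹)) • u := by
  have hlie : ⁅u, v⁆ = (1 - q) • (u * v) := by rw [Ring.lie_def, h, sub_smul, one_smul]
  have hconj : star v * (u * v) = q⁻¹ • u := by
    rw [← mul_assoc, star_mul_eq_inv_smul_mul_star hv hq h, smul_mul_assoc, mul_assoc,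
      Unitary.star_mul_self_of_mem hv, mul_one]
  rw [hlie, Ring.lie_def, smul_mul_assoc, mul_smul_comm, ← smul_sub, mul_assoc,
    Unitary.mul_star_self_of_mem hv, mul_one, hconj]
  module

lemma dmsa_lhs_eq_of_mul_eq_smul_mul (hu : u ∈ unitary A) (hv : v ∈ unitary A) (hq : q ≠ 0)
    (h : v * u = q • (u * v)) :
    ⁅⁅u, star u⁆, u⁆ + ⁅⁅u, v⁆, star v⁆ + ⁅⁅u, star v⁆, v⁆ =
      (2 * ((1 - q) * (1 - q⁻¹))) • u := by
  have hstar : star v * u = q⁻¹ • (u * star v) := star_mul_eq_inv_smul_mul_star hv hq h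
  have hv' := lie_lie_star_eq_smul_of_mul_eq_smul_mul (Unitary.star_mem hv) (inv_ne_zero hq)
    hstar
  rw [star_star, inv_inv] at hv'
  have hnormal : ⁅⁅u, star u⁆, u⁆ = 0 := by
    rw [(commute_unitary_self_star hu).lie_eq, Ring.lie_def, zero_mul, mul_zero, sub_zero]
  rw [hnormal, zero_add, lie_lie_star_eq_smul_of_mul_eq_smul_mul hv hq h, hv', ← add_smul]
  ring_nf

theorem dmsaEquations_of_mul_eq_smul_mul (hu : u ∈ unitary A) (hv : v ∈ unitary A)
    (hq : q ≠ 0) (h : v * u = q • (u * v)) :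
    DMSAEquations ((1 - q) * (1 - q⁻¹)) u v := by
  refine ⟨dmsa_lhs_eq_of_mul_eq_smul_mul hu hv hq h, ?_⟩
  have := dmsa_lhs_eq_of_mul_eq_smul_mul hv hu (inv_ne_zero hq)
    (mul_eq_inv_smul_mul_of_mul_eq_smul_mul hq h)
  rwa [inv_inv, mul_comm (1 - q⁻¹)] at this

end DMSA

lemma Complex.one_sub_mul_one_sub_inv_of_norm_eq_one {q : ℂ} (hq : ‖q‖ = 1) :
    (1 - q) * (1 - q⁻¹) = ‖1 - q‖ ^ 2 := by
  rw [Complex.inv_eq_conj hq, ← Complex.mul_conj', map_sub, map_one]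

lemma Complex.mem_unitary_of_norm_eq_one {z : ℂ} (hz : ‖z‖ = 1) : z ∈ unitary ℂ := by
  rw [Unitary.mem_iff_star_mul_self, Complex.star_def, Complex.conj_mul', hz]
  norm_num

lemma matComm_eq_lie {n : ℕ} (A B : Matrix (Fin n) (Fin n) ℂ) : matComm A B = ⁅A, B⁆ :=
  (Ring.lie_def A B).symm

namespace Matrix

variable {ι α : Type*} [Fintype ι] [DecidableEq ι] [CommRing α] [StarRing α]

lemma diagonal_mem_unitaryGroup {d : ι → α} (hd : ∀ i, d i ∈ unitary α) :
    diagonal d ∈ unitaryGroup ι α := by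
  rw [mem_unitaryGroup_iff, star_eq_conjTranspose, diagonal_conjTranspose,
    diagonal_mul_diagonal, ← diagonal_one]
  exact congrArg diagonal (funext fun i => Unitary.mul_star_self_of_mem (hd i))

lemma permMatrix_mem_unitaryGroup (σ : Equiv.Perm ι) : σ.permMatrix α ∈ unitaryGroup ι α := by
  rw [mem_unitaryGroup_iff, star_eq_conjTranspose, conjTranspose_permMatrix, ← permMatrix_mul,
    inv_mul_cancel, permMatrix_one]

end Matrix

lemma shift_eq_permMatrix_finRotate (n : ℕ) : shift n = (finRotate n).permMatrix ℂ := by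
  ext k l
  rcases n with _ | n
  · exact k.elim0
  simp [shift, PEquiv.toMatrix_apply, Equiv.toPEquiv_apply, Fin.ext_iff, Fin.val_add, eq_comm]

lemma clock_mem_unitaryGroup (n : ℕ) {q : ℂ} (hq : ‖q‖ = 1) :
    clock n q ∈ Matrix.unitaryGroup (Fin n) ℂ :=
  Matrix.diagonal_mem_unitaryGroup fun k =>
    pow_mem (Complex.mem_unitary_of_norm_eq_one hq) (k : ℕ)

lemma shift_mul_clock {n : ℕ} {q : ℂ} (hq : q ^ n = 1) :
    shift n * clock n q = q • (clock n q * shift n) := by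
  ext k l
  simp only [shift, clock, Matrix.mul_diagonal, Matrix.diagonal_mul, Matrix.smul_apply,
    Matrix.of_apply, smul_eq_mul]
  split_ifs with hkl
  · rw [hkl, ← pow_eq_pow_mod _ hq, pow_succ]; ring
  · simp

/-- If `Λ`, `T` are unitary with `TΛ = qΛT` and `|q| = 1`, then `(Λ,T)` satisfies the
DMSA equations with spectrum `{|1−q|²}`.  In particular this applies to the fuzzy
torus matrices `Λ = e^{iθ}g`, `T = e^{iθ′}h` with `qⁿ = 1`. -/
theorem fuzzy_torus_dmsa (n : ℕ) (hn : 0 < n)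
    (Λ T : Matrix (Fin n) (Fin n) ℂ)
    (hΛ : Λ ∈ Matrix.unitaryGroup (Fin n) ℂ) (hT : T ∈ Matrix.unitaryGroup (Fin n) ℂ)
    (q : ℂ) (hq : ‖q‖ = 1) (hcomm : T * Λ = q • (Λ * T)) :
    (matComm (matComm Λ Λᴴ) Λ + matComm (matComm Λ T) Tᴴ + matComm (matComm Λ Tᴴ) T =
        ((2 * ‖1 - q‖ ^ 2 : ℝ) : ℂ) • Λ ∧
      matComm (matComm T Tᴴ) T + matComm (matComm T Λ) Λᴴ + matComm (matComm T Λᴴ) Λ =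
        ((2 * ‖1 - q‖ ^ 2 : ℝ) : ℂ) • T) ∧
    (∀ (θ θ' : ℝ) (q' : ℂ), q' ^ n = 1 →
      (Complex.exp (Complex.I * (θ : ℂ)) • clock n q') ∈ Matrix.unitaryGroup (Fin n) ℂ ∧
      (Complex.exp (Complex.I * (θ' : ℂ)) • shift n) ∈ Matrix.unitaryGroup (Fin n) ℂ ∧
      (Complex.exp (Complex.I * (θ' : ℂ)) • shift n) *
          (Complex.exp (Complex.I * (θ : ℂ)) • clock n q') =
        q' • ((Complex.exp (Complex.I * (θ : ℂ)) • clock n q') *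
          (Complex.exp (Complex.I * (θ' : ℂ)) • shift n))) := by
  have hμ : ((2 * ‖1 - q‖ ^ 2 : ℝ) : ℂ) = 2 * ((1 - q) * (1 - q⁻¹)) := by
    push_cast
    rw [Complex.one_sub_mul_one_sub_inv_of_norm_eq_one hq]
  have hq0 : q ≠ 0 := norm_ne_zero_iff.mp (hq ▸ one_ne_zero)
  have hphase (t : ℝ) : Complex.exp (Complex.I * t) ∈ unitary ℂ :=
    Complex.mem_unitary_of_norm_eq_one (by rw [mul_comm, Complex.norm_exp_ofReal_mul_I])
  refine ⟨?_, fun θ θ' q' hq' => ⟨?_, ?_, ?_⟩⟩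
  · simpa only [DMSAEquations, hμ, matComm_eq_lie, ← Matrix.star_eq_conjTranspose] using
      dmsaEquations_of_mul_eq_smul_mul hΛ hT hq0 hcomm
  · exact Unitary.smul_mem_of_mem (hphase θ)
      (clock_mem_unitaryGroup n (Complex.norm_eq_one_of_pow_eq_one hq' hn.ne'))
  · exact Unitary.smul_mem_of_mem (hphase θ')
      (shift_eq_permMatrix_finRotate n ▸ Matrix.permMatrix_mem_unitaryGroup _)
  · rw [smul_mul_smul_comm, shift_mul_clock hq', smul_mul_smul_comm, smul_comm, mul_comm]
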